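/- arXiv:1809.03095 — 9 statements merged into one kernel-verified Lean document; each statement's English description precedes it below -/
import Mathlib

section
/- For every proper Kripke frame M over the agent set A, the Kripke frame F(G(M)) is isomorphic to M; in particular, the facets of G(M) are exactly the sets {[v^s_0], …, [v^s_n]} for states s of M, they are in bijection with the states of M, and two facets are a_i-indistinguishable in F(G(M)) iff the corresponding states are ∼_{a_i}-related in M. -/
/-! ### Chromatic simplicial complexes and Kripke frames -/

/-- A chromatic simplicial complex over the set of agents `A`, on the vertex type `V`. -/
structure CSC (A V : Type) where
  simplexes : Set (Set V)
  nonempty_mem : ∀ X ∈ simplexes, X.Nonempty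
  finite_mem : ∀ X ∈ simplexes, X.Finite
  down_closed : ∀ X ∈ simplexes, ∀ Y : Set V, Y ⊆ X → Y.Nonempty → Y ∈ simplexes
  color : V → A
  chromatic : ∀ X ∈ simplexes, Set.InjOn color X

namespace CSC

variable {A V W : Type}

/-- A vertex of the complex. -/
def IsVertex (C : CSC A V) (v : V) : Prop := {v} ∈ C.simplexes

/-- A facet: a maximal simplex. -/
def IsFacet (C : CSC A V) (X : Set V) : Prop :=
  X ∈ C.simplexes ∧ ∀ Y ∈ C.simplexes, X ⊆ Y → X = Y

/-- A pure chromatic simplicial complex of dimension `n`: all facets have `n+1` vertices. -/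
def Pure (C : CSC A V) (n : ℕ) : Prop :=
  ∀ X, C.IsFacet X → X.ncard = n + 1

/-- A chromatic simplicial map: sends simplexes to simplexes and preserves colors. -/
def IsChromMap (C : CSC A V) (D : CSC A W) (f : V → W) : Prop :=
  (∀ X ∈ C.simplexes, f '' X ∈ D.simplexes) ∧
  (∀ v, C.IsVertex v → D.color (f v) = C.color v)

/-- The type of facets of a complex. -/
def Facets (C : CSC A V) : Type := {X : Set V // C.IsFacet X}

/-- The vertices of a complex, as a type. -/
abbrev Vertices (C : CSC A V) : Type := {v : V // C.IsVertex v}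

end CSC

/-- A Kripke frame over the set of agents `A` with states `S`:
a family of equivalence (indistinguishability) relations indexed by agents. -/
structure KFrame (A S : Type) where
  rel : A → S → S → Prop
  isEquiv : ∀ a, Equivalence (rel a)

namespace KFrame

/-- A Kripke frame is proper if any two distinct states are distinguished by some agent. -/
def Proper {A S : Type} (M : KFrame A S) : Prop := ∀ s t : S, (∀ a, M.rel a s t) → s = t

/-- A morphism of Kripke frames. -/
def IsMorphism {A S T : Type} (M : KFrame A S) (N : KFrame A T) (f : S → T) : Prop :=
  ∀ a u v, M.rel a u v → N.rel a (f u) (f v)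

end KFrame

/-! ### Basic facts about pure chromatic complexes over `n+1` agents -/

namespace CSC

variable {n : ℕ} {V : Type}

lemma ncard_le_of_mem (C : CSC (Fin (n+1)) V) {X : Set V} (hX : X ∈ C.simplexes) :
    X.ncard ≤ n + 1 := by
  have h1 : (C.color '' X).ncard = X.ncard := Set.ncard_image_of_injOn (C.chromatic X hX)
  calc X.ncard = (C.color '' X).ncard := h1.symm
    _ ≤ (Set.univ : Set (Fin (n+1))).ncard :=
        Set.ncard_le_ncard (Set.subset_univ _) Set.finite_univ
    _ = n + 1 := by rw [Set.ncard_univ]; simp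

/-- Every simplex of a chromatic complex over `n+1` agents is contained in a facet. -/
lemma exists_facet_above (C : CSC (Fin (n+1)) V) :
    ∀ (k : ℕ) (X : Set V), X ∈ C.simplexes → n + 1 ≤ X.ncard + k →
      ∃ Y, C.IsFacet Y ∧ X ⊆ Y := by
  intro k
  induction k with
  | zero =>
    intro X hX hle
    refine ⟨X, ⟨hX, ?_⟩, subset_rfl⟩
    intro Y hY hXY
    exact (Set.eq_of_subset_of_ncard_le hXY
      (le_trans (C.ncard_le_of_mem hY) (by omega)) (C.finite_mem Y hY))
  | succ k ih =>
    intro X hX hle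
    by_cases hf : C.IsFacet X
    · exact ⟨X, hf, subset_rfl⟩
    · simp only [IsFacet, hX, true_and] at hf
      push_neg at hf
      obtain ⟨Y, hY, hXY, hne⟩ := hf
      have hlt : X.ncard < Y.ncard :=
        Set.ncard_lt_ncard (ssubset_of_subset_of_ne hXY hne) (C.finite_mem Y hY)
      obtain ⟨Z, hZ, hYZ⟩ := ih Y hY (by omega)
      exact ⟨Z, hZ, hXY.trans hYZ⟩

lemma mem_facet (C : CSC (Fin (n+1)) V) {X : Set V} (hX : X ∈ C.simplexes) :
    ∃ Y, C.IsFacet Y ∧ X ⊆ Y :=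
  C.exists_facet_above (n+1) X hX (by omega)

/-- In a pure complex of dimension `n` over `n+1` agents, every facet contains a vertex
of each color. -/
lemma facet_exists_color (C : CSC (Fin (n+1)) V) (hp : C.Pure n)
    {X : Set V} (hX : C.IsFacet X) (a : Fin (n+1)) : ∃ v ∈ X, C.color v = a := by
  have himg : (C.color '' X).ncard = n + 1 := by
    rw [Set.ncard_image_of_injOn (C.chromatic X hX.1)]
    exact hp X hX
  have huniv : C.color '' X = Set.univ := by
    apply Set.eq_of_subset_of_ncard_le (Set.subset_univ _) ?_ Set.finite_univ
    rw [himg, Set.ncard_univ]; simp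
  have ha : a ∈ C.color '' X := by rw [huniv]; trivial
  obtain ⟨v, hv, hc⟩ := ha
  exact ⟨v, hv, hc⟩

end CSC

/-! ### The functor F : from pure chromatic simplicial complexes to Kripke frames. -/

/-- The Kripke frame associated with a pure chromatic simplicial complex: states are the
facets, and two facets are indistinguishable by agent `a` iff they share an `a`-colored
vertex. -/
def kframeOf {n : ℕ} {V : Type} (C : CSC (Fin (n+1)) V) (hp : C.Pure n) :
    KFrame (Fin (n+1)) C.Facets where
  rel a X Y := ∃ v, v ∈ X.1 ∩ Y.1 ∧ C.color v = a
  isEquiv a := by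
    constructor
    · intro X
      obtain ⟨v, hv, hc⟩ := C.facet_exists_color hp X.2 a
      exact ⟨v, ⟨hv, hv⟩, hc⟩
    · rintro X Y ⟨v, ⟨h1, h2⟩, hc⟩
      exact ⟨v, ⟨h2, h1⟩, hc⟩
    · rintro X Y Z ⟨v, ⟨hvX, hvY⟩, hcv⟩ ⟨w, ⟨hwY, hwZ⟩, hcw⟩
      have hvw : v = w := C.chromatic Y.1 Y.2.1 hvY hwY (by rw [hcv, hcw])
      exact ⟨v, ⟨hvX, by rw [hvw]; exact hwZ⟩, hcv⟩

lemma kframeOf_proper {n : ℕ} {V : Type} (C : CSC (Fin (n+1)) V) (hp : C.Pure n) :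
    (kframeOf C hp).Proper := by
  have key : ∀ Z W : C.Facets, (∀ a, ∃ v, v ∈ Z.1 ∩ W.1 ∧ C.color v = a) → W.1 ⊆ Z.1 := by
    intro Z W hzw w hw
    obtain ⟨v, ⟨hvZ, hvW⟩, hcv⟩ := hzw (C.color w)
    have : v = w := C.chromatic W.1 W.2.1 hvW hw hcv
    exact this ▸ hvZ
  intro X Y h
  apply Subtype.ext
  apply Set.Subset.antisymm
  · apply key Y X
    intro a
    obtain ⟨v, hv, hc⟩ := h a
    exact ⟨v, ⟨hv.2, hv.1⟩, hc⟩
  · exact key X Y h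

/-! ### The functor G : from Kripke frames to pure chromatic simplicial complexes. -/

/-- The identification of formal vertices `(s, i)`: `(s,i) ≈ (t,j)` iff `i = j` and
`s ∼_{a_i} t`. -/
def gSetoid {n : ℕ} {S : Type} (M : KFrame (Fin (n+1)) S) : Setoid (S × Fin (n+1)) where
  r p q := p.2 = q.2 ∧ M.rel p.2 p.1 q.1
  iseqv := by
    constructor
    · exact fun p => ⟨rfl, (M.isEquiv p.2).refl p.1⟩
    · rintro ⟨s, i⟩ ⟨t, j⟩ ⟨h1, h2⟩
      dsimp at h1 h2 ⊢
      subst h1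
      exact ⟨rfl, (M.isEquiv i).symm h2⟩
    · rintro ⟨s, i⟩ ⟨t, j⟩ ⟨u, k⟩ ⟨h1, h2⟩ ⟨h3, h4⟩
      dsimp at h1 h2 h3 h4 ⊢
      subst h1; subst h3
      exact ⟨rfl, (M.isEquiv i).trans h2 h4⟩

/-- The vertices of the simplicial complex associated with a Kripke frame:
equivalence classes of formal vertices. -/
def GVert {n : ℕ} {S : Type} (M : KFrame (Fin (n+1)) S) : Type :=
  Quotient (gSetoid M)

/-- The `n`-simplex glued in for the state `s`. -/
def gFacet {n : ℕ} {S : Type} (M : KFrame (Fin (n+1)) S) (s : S) : Set (GVert M) :=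
  Set.range fun i => Quotient.mk (gSetoid M) (s, i)

/-- The chromatic simplicial complex associated with a Kripke frame. -/
def cscOf {n : ℕ} {S : Type} (M : KFrame (Fin (n+1)) S) : CSC (Fin (n+1)) (GVert M) where
  simplexes := {X | X.Nonempty ∧ ∃ s, X ⊆ gFacet M s}
  nonempty_mem _ hX := hX.1
  finite_mem X hX := by
    obtain ⟨-, s, hs⟩ := hX
    exact (Set.finite_range _).subset hs
  down_closed X hX Y hYX hY := by
    obtain ⟨-, s, hs⟩ := hX
    exact ⟨hY, s, hYX.trans hs⟩
  color := Quotient.lift Prod.snd fun _ _ h => h.1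
  chromatic := by
    rintro X ⟨-, s, hs⟩ u hu v hv hcol
    obtain ⟨i, hi⟩ := hs hu
    obtain ⟨j, hj⟩ := hs hv
    rw [← hi, ← hj] at hcol ⊢
    have : i = j := hcol
    rw [this]

lemma gFacet_mem_simplexes {n : ℕ} {S : Type} (M : KFrame (Fin (n+1)) S) (s : S) :
    gFacet M s ∈ (cscOf M).simplexes :=
  ⟨⟨Quotient.mk (gSetoid M) (s, 0), ⟨0, rfl⟩⟩, s, subset_rfl⟩

lemma gFacet_subset_iff {n : ℕ} {S : Type} (M : KFrame (Fin (n+1)) S) {s t : S} :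
    gFacet M s ⊆ gFacet M t ↔ ∀ i, M.rel i s t := by
  constructor
  · intro h i
    obtain ⟨j, hj⟩ := h ⟨i, rfl⟩
    have := Quotient.exact hj
    obtain ⟨h1, h2⟩ := this
    dsimp at h1 h2
    rw [← h1]
    exact (M.isEquiv j).symm h2
  · rintro h v ⟨i, rfl⟩
    exact ⟨i, Quotient.sound ⟨rfl, (M.isEquiv i).symm (h i)⟩⟩

lemma gFacet_isFacet {n : ℕ} {S : Type} (M : KFrame (Fin (n+1)) S) (s : S) :
    (cscOf M).IsFacet (gFacet M s) := by
  refine ⟨gFacet_mem_simplexes M s, ?_⟩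
  rintro Y ⟨-, t, ht⟩ hsub
  have h1 : gFacet M s ⊆ gFacet M t := hsub.trans ht
  have h2 : gFacet M t ⊆ gFacet M s :=
    (gFacet_subset_iff M).2 fun i => (M.isEquiv i).symm ((gFacet_subset_iff M).1 h1 i)
  exact Set.Subset.antisymm hsub (ht.trans h2)

lemma isFacet_cscOf_iff {n : ℕ} {S : Type} (M : KFrame (Fin (n+1)) S) (X : Set (GVert M)) :
    (cscOf M).IsFacet X ↔ ∃ s, X = gFacet M s := by
  constructor
  · rintro ⟨⟨hne, s, hs⟩, hmax⟩
    exact ⟨s, hmax _ (gFacet_mem_simplexes M s) hs⟩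
  · rintro ⟨s, rfl⟩
    exact gFacet_isFacet M s

lemma ncard_gFacet {n : ℕ} {S : Type} (M : KFrame (Fin (n+1)) S) (s : S) :
    (gFacet M s).ncard = n + 1 := by
  have hinj : Function.Injective fun i : Fin (n+1) => Quotient.mk (gSetoid M) (s, i) := by
    intro i j hij
    exact (Quotient.exact hij).1
  show (Set.range fun i : Fin (n+1) => Quotient.mk (gSetoid M) (s, i)).ncard = n + 1
  rw [← Set.image_univ, Set.ncard_image_of_injective _ hinj, Set.ncard_univ]
  simp

/-- The complex associated with a Kripke frame over `n+1` agents is pure of dimension `n`. -/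
lemma cscOf_pure {n : ℕ} {S : Type} (M : KFrame (Fin (n+1)) S) : (cscOf M).Pure n := by
  intro X hX
  obtain ⟨s, rfl⟩ := (isFacet_cscOf_iff M X).1 hX
  exact ncard_gFacet M s

/-! A vertex `⟦(s, i)⟧` of `G(M)` has color `i`, so two glued simplexes `gFacet M s` and
`gFacet M t` share an `a`-colored vertex exactly when `⟦(s, a)⟧ = ⟦(t, a)⟧`, that is when
`s ∼_a t`. Every simplex of `G(M)` lies in a glued one, so the facets are the glued simplexes,
and `gFacet M s = gFacet M t` means that no agent distinguishes `s` from `t`, which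
properness turns into `s = t`. -/

section GluedComplex

variable {n : ℕ} {S : Type} (M : KFrame (Fin (n+1)) S)

lemma gSetoid_mk_eq_mk_iff {s t : S} {i j : Fin (n+1)} :
    Quotient.mk (gSetoid M) (s, i) = Quotient.mk (gSetoid M) (t, j) ↔ i = j ∧ M.rel i s t :=
  Quotient.eq

lemma cscOf_color_mk (s : S) (i : Fin (n+1)) :
    (cscOf M).color (Quotient.mk (gSetoid M) (s, i)) = i :=
  rfl

lemma gFacet_injective (hM : M.Proper) : Function.Injective (gFacet M) :=
  fun s t h => hM s t ((gFacet_subset_iff M).1 h.le)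

lemma kframeOf_cscOf_rel_iff (a : Fin (n+1)) (s t : S) :
    (kframeOf (cscOf M) (cscOf_pure M)).rel a
        ⟨gFacet M s, gFacet_isFacet M s⟩ ⟨gFacet M t, gFacet_isFacet M t⟩ ↔ M.rel a s t := by
  constructor
  · rintro ⟨-, ⟨⟨i, rfl⟩, ⟨j, hj⟩⟩, hcolor⟩
    rw [cscOf_color_mk] at hcolor
    subst hcolor
    obtain ⟨rfl, hts⟩ := (gSetoid_mk_eq_mk_iff M).1 hj
    exact (M.isEquiv j).symm hts
  · intro hst
    refine ⟨Quotient.mk (gSetoid M) (s, a), ⟨⟨a, rfl⟩, ⟨a, ?_⟩⟩, rfl⟩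
    exact (gSetoid_mk_eq_mk_iff M).2 ⟨rfl, (M.isEquiv a).symm hst⟩

end GluedComplex

/-- For every proper Kripke frame `M` over the agents `A = Fin (n+1)`,
`F(G(M))` is isomorphic to `M`: the facets of `G(M)` are exactly the glued simplexes
`gFacet M s`, these are in bijection with the states of `M`, and two such facets are
`a`-indistinguishable in `F(G(M))` iff the corresponding states are `∼_a`-related in `M`. -/
theorem statement1 {n : ℕ} {S : Type} (M : KFrame (Fin (n+1)) S) (hM : M.Proper) :
    (∀ X : Set (GVert M), (cscOf M).IsFacet X ↔ ∃ s, X = gFacet M s) ∧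
    Function.Bijective
      (fun s : S => (⟨gFacet M s, gFacet_isFacet M s⟩ : (cscOf M).Facets)) ∧
    (∀ (a : Fin (n+1)) (s t : S),
      (kframeOf (cscOf M) (cscOf_pure M)).rel a
        ⟨gFacet M s, gFacet_isFacet M s⟩ ⟨gFacet M t, gFacet_isFacet M t⟩ ↔ M.rel a s t) := by
  refine ⟨isFacet_cscOf_iff M, ⟨?_, ?_⟩, kframeOf_cscOf_rel_iff M⟩
  · exact fun s t h => gFacet_injective M hM (congrArg Subtype.val h)
  · rintro ⟨X, hX⟩
    obtain ⟨s, rfl⟩ := (isFacet_cscOf_iff M X).1 hX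
    exact ⟨s, rfl⟩
end

section
/- For every simplicial model M, every facet X of M, and every epistemic formula φ of the language 𝓛_K, the satisfaction relation on simplicial models agrees with the standard Kripke semantics on the associated Kripke model: M, X ⊨ φ if and only if F(M), X ⊨_K φ. -/
/-! ### The epistemic language `𝓛_K` -/

/-- Epistemic formulas over agents `A` and atomic propositions `AP`:
`φ ::= p | ¬φ | (φ ∧ φ) | K_a φ`. -/
inductive Form (A AP : Type) : Type
  | atom : AP → Form A AP
  | neg : Form A AP → Form A AP
  | and : Form A AP → Form A AP → Form A AP
  | K : A → Form A AP → Form A AP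

namespace Form

variable {A AP : Type}

/-- Implication, as a derived connective. -/
def imp (φ ψ : Form A AP) : Form A AP := .neg (.and φ (.neg ψ))

/-- Disjunction, as a derived connective. -/
def or (φ ψ : Form A AP) : Form A AP := .neg (.and (.neg φ) (.neg ψ))

/-- A false formula. -/
def falsum [Inhabited AP] : Form A AP := .and (.atom default) (.neg (.atom default))

/-- A true formula. -/
def verum [Inhabited AP] : Form A AP := .neg falsum

end Form

/-- Finite disjunctions. -/
def bigOr {A AP : Type} [Inhabited AP] (l : List (Form A AP)) : Form A AP :=
  l.foldr Form.or Form.falsum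

/-- Finite conjunctions. -/
def bigAnd {A AP : Type} [Inhabited AP] (l : List (Form A AP)) : Form A AP :=
  l.foldr Form.and Form.verum

/-! ### Simplicial models and their semantics.
Atomic propositions are pairs `(a, x)`: "agent `a` holds the value `x`". -/

/-- A simplicial model: a chromatic simplicial complex together with a labeling of each
vertex by a set of atomic propositions concerning the agent coloring that vertex. -/
structure SModel (A V Val : Type) extends CSC A V where
  label : V → Set (A × Val)
  label_local : ∀ v, toCSC.IsVertex v → ∀ p ∈ label v, p.1 = color v

namespace SModel

variable {A V W Val : Type}

/-- Satisfaction of a formula at a facet of a simplicial model. -/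
def sat (M : SModel A V Val) : Set V → Form A (A × Val) → Prop
  | X, .atom p => ∃ v ∈ X, p ∈ M.label v
  | X, .neg φ => ¬ M.sat X φ
  | X, .and φ ψ => M.sat X φ ∧ M.sat X ψ
  | X, .K a φ => ∀ Y, M.toCSC.IsFacet Y → (∃ v, v ∈ X ∩ Y ∧ M.color v = a) → M.sat Y φ

/-- A morphism of simplicial models: a chromatic simplicial map preserving the labeling. -/
def IsMorphism (M : SModel A V Val) (N : SModel A W Val) (f : V → W) : Prop :=
  M.toCSC.IsChromMap N.toCSC f ∧ ∀ v, M.toCSC.IsVertex v → N.label (f v) = M.label v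

end SModel

/-! ### Kripke models and their semantics -/

/-- A Kripke model: a Kripke frame with a valuation. -/
structure KModel (A S AP : Type) extends KFrame A S where
  val : S → Set AP

namespace KModel

variable {A S T AP Val : Type}

/-- Standard Kripke semantics. -/
def sat (M : KModel A S AP) : S → Form A AP → Prop
  | s, .atom p => p ∈ M.val s
  | s, .neg φ => ¬ M.sat s φ
  | s, .and φ ψ => M.sat s φ ∧ M.sat s ψ
  | s, .K a φ => ∀ t, M.rel a s t → M.sat t φ

/-- A proper Kripke model. -/
def Proper (M : KModel A S AP) : Prop := M.toKFrame.Proper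

/-- A local Kripke model: an agent always knows its own values. -/
def Local (M : KModel A S (A × Val)) : Prop :=
  ∀ (a : A) (s t : S), M.rel a s t →
    {p ∈ M.val s | p.1 = a} = {p ∈ M.val t | p.1 = a}

end KModel

/-- The functor `F` on models: the Kripke model associated with a simplicial model, with
states the facets, labeled by the union of the labels of the vertices. -/
def kmodelOf {n : ℕ} {V Val : Type} (M : SModel (Fin (n+1)) V Val)
    (hp : M.toCSC.Pure n) : KModel (Fin (n+1)) M.toCSC.Facets (Fin (n+1) × Val) where
  toKFrame := kframeOf M.toCSC hp
  val X := ⋃ v ∈ X.1, M.label v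


/-- For every simplicial model `M`, facet `X` and formula `φ`,
satisfaction on the simplicial model agrees with standard Kripke semantics on the
associated Kripke model `F(M)`. -/
theorem statement4 {n : ℕ} {V Val : Type} (M : SModel (Fin (n+1)) V Val)
    (hp : M.toCSC.Pure n) (X : Set V) (hX : M.toCSC.IsFacet X)
    (φ : Form (Fin (n+1)) (Fin (n+1) × Val)) :
    M.sat X φ ↔ (kmodelOf M hp).sat ⟨X, hX⟩ φ := by
  induction φ generalizing X with
  | atom p =>
    simp [SModel.sat, KModel.sat, kmodelOf]
  | neg φ ih =>
    simp [SModel.sat, KModel.sat, ih X hX]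
  | and φ ψ ih1 ih2 =>
    simp [SModel.sat, KModel.sat, ih1 X hX, ih2 X hX]
  | K a φ ih =>
    constructor
    · intro h Y hrel
      exact (ih Y.1 Y.2).mp (h Y.1 Y.2 hrel)
    · intro h Y hY hrel
      exact (ih Y hY).mpr (h ⟨Y, hY⟩ hrel)
end

section
/- For every local proper Kripke model N, every state s of N, and every epistemic formula φ of the language 𝓛_K: N, s ⊨_K φ if and only if G(N), G(s) ⊨ φ, where G(s) denotes the facet {v_0^s, …, v_n^s} of the simplicial model G(N) corresponding to the state s. -/
/-- The functor `G` on models: the simplicial model associated with a local Kripke model,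
where the vertex `⟦(s,i)⟧` is labeled by `L(s) ∩ AP_{a_i}`. -/
def smodelOf {n : ℕ} {S Val : Type} (M : KModel (Fin (n+1)) S (Fin (n+1) × Val))
    (hloc : M.Local) : SModel (Fin (n+1)) (GVert M.toKFrame) Val where
  toCSC := cscOf M.toKFrame
  label := Quotient.lift (fun p : S × Fin (n+1) => {q ∈ M.val p.1 | q.1 = p.2})
    (by
      rintro ⟨s, i⟩ ⟨t, j⟩ ⟨h1, h2⟩
      dsimp at h1 h2 ⊢
      subst h1
      exact hloc i s t h2)
  label_local := by
    intro v
    induction v using Quotient.ind with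
    | _ p => exact fun _ q hq => hq.2

/-!
Each state `s` of `N` becomes the facet `gFacet s`, and every facet of `G(N)` is of this form.
Two such facets share a vertex of color `a` exactly when the states are `a`-indistinguishable,
and the `a`-colored vertex of `gFacet s` carries exactly the `a`-atoms true at `s`. So the
simplicial semantics at `gFacet s` unfolds clause by clause into the Kripke semantics at `s`,
and the equivalence follows by induction on the formula.
-/

lemma forall_isFacet_cscOf_iff {n : ℕ} {S : Type} (M : KFrame (Fin (n+1)) S)
    (P : Set (GVert M) → Prop) :
    (∀ Y, (cscOf M).IsFacet Y → P Y) ↔ ∀ t, P (gFacet M t) := by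
  refine ⟨fun h t => h _ (gFacet_isFacet M t), fun h Y hY => ?_⟩
  obtain ⟨t, rfl⟩ := (isFacet_cscOf_iff M Y).1 hY
  exact h t

lemma exists_color_mem_inter_gFacet_iff {n : ℕ} {S : Type} (M : KFrame (Fin (n+1)) S)
    (a : Fin (n+1)) (s t : S) :
    (∃ v, v ∈ gFacet M s ∩ gFacet M t ∧ (cscOf M).color v = a) ↔ M.rel a s t := by
  constructor
  · rintro ⟨-, ⟨⟨i, rfl⟩, ⟨j, hj⟩⟩, rfl⟩
    obtain ⟨rfl, hrel⟩ := Quotient.eq.1 hj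
    exact (M.isEquiv _).symm hrel
  · intro hrel
    exact ⟨_, ⟨⟨a, rfl⟩, ⟨a, Quotient.sound ⟨rfl, (M.isEquiv a).symm hrel⟩⟩⟩, rfl⟩

lemma exists_mem_gFacet_label_iff {n : ℕ} {S Val : Type}
    (N : KModel (Fin (n+1)) S (Fin (n+1) × Val)) (hloc : N.Local) (s : S)
    (p : Fin (n+1) × Val) :
    (∃ v ∈ gFacet N.toKFrame s, p ∈ (smodelOf N hloc).label v) ↔ p ∈ N.val s := by
  constructor
  · rintro ⟨-, ⟨i, rfl⟩, hp⟩
    exact hp.1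
  · intro hp
    exact ⟨_, ⟨p.1, rfl⟩, hp, rfl⟩

theorem statement5_general {n : ℕ} {S Val : Type} (N : KModel (Fin (n+1)) S (Fin (n+1) × Val))
    (hloc : N.Local) (s : S)
    (φ : Form (Fin (n+1)) (Fin (n+1) × Val)) :
    N.sat s φ ↔ (smodelOf N hloc).sat (gFacet N.toKFrame s) φ := by
  induction φ generalizing s with
  | atom p => exact (exists_mem_gFacet_label_iff N hloc s p).symm
  | neg φ ih => exact (ih s).not
  | and φ ψ ih₁ ih₂ => exact and_congr (ih₁ s) (ih₂ s)
  | K a φ ih =>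
    exact ((forall_isFacet_cscOf_iff N.toKFrame _).trans <| forall_congr' fun t =>
      imp_congr (exists_color_mem_inter_gFacet_iff N.toKFrame a s t) (ih t).symm).symm

/-- For every local proper Kripke model `N`, state `s` and formula `φ`:
`N, s ⊨_K φ` iff `G(N), G(s) ⊨ φ`, where `G(s)` is the facet of the simplicial model
`G(N)` corresponding to the state `s`. -/
theorem statement5 {n : ℕ} {S Val : Type} (N : KModel (Fin (n+1)) S (Fin (n+1) × Val))
    (hloc : N.Local) (hprop : N.Proper) (s : S)
    (φ : Form (Fin (n+1)) (Fin (n+1) × Val)) :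
    N.sat s φ ↔ (smodelOf N hloc).sat (gFacet N.toKFrame s) φ :=
  statement5_general N hloc s φ
end

section
/- The axiom system S5_n + Loc is sound with respect to the class of simplicial models: every formula derivable in S5_n extended with the locality axioms Loc is true at every facet of every simplicial model. -/
lemma CSC.isVertex_of_mem {A V : Type} (C : CSC A V) {X : Set V} {v : V}
    (hX : X ∈ C.simplexes) (hv : v ∈ X) : C.IsVertex v :=
  C.down_closed X hX {v} (by simpa using hv) ⟨v, rfl⟩

/-! ### The proof system `S5_n + Loc` -/

/-- Evaluation of a formula under a propositional assignment `b` (which may assign any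
truth value to atoms and to formulas of the form `K_a φ`), interpreting `¬` and `∧`
classically. -/
def propEval {A AP : Type} (b : Form A AP → Prop) : Form A AP → Prop
  | .atom p => b (.atom p)
  | .neg φ => ¬ propEval b φ
  | .and φ ψ => propEval b φ ∧ propEval b ψ
  | .K a φ => b (.K a φ)

/-- Derivability in `S5_n` extended with the locality axioms `Loc`:
all propositional tautologies, the `S5` axioms `K`, `T`, `4`, `5` for each agent,
the locality axioms `K_a p_{a,x} ∨ K_a ¬p_{a,x}`, closed under modus ponens and
necessitation. -/
inductive Prov {A Val : Type} : Form A (A × Val) → Prop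
  | taut {φ} : (∀ b, propEval b φ) → Prov φ
  | axK (a : A) (φ ψ : Form A (A × Val)) :
      Prov (((Form.K a (φ.imp ψ)).imp ((Form.K a φ).imp (Form.K a ψ))))
  | axT (a : A) (φ : Form A (A × Val)) : Prov ((Form.K a φ).imp φ)
  | ax4 (a : A) (φ : Form A (A × Val)) : Prov ((Form.K a φ).imp (Form.K a (Form.K a φ)))
  | ax5 (a : A) (φ : Form A (A × Val)) :
      Prov ((Form.neg (Form.K a φ)).imp (Form.K a (Form.neg (Form.K a φ))))
  | axLoc (a : A) (x : Val) :
      Prov ((Form.K a (Form.atom (a, x))).or (Form.K a (Form.neg (Form.atom (a, x)))))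
  | mp {φ ψ} : Prov (φ.imp ψ) → Prov φ → Prov ψ
  | nec (a : A) {φ} : Prov φ → Prov (Form.K a φ)

lemma sat_imp {A V Val : Type} (M : SModel A V Val) (X : Set V) (φ ψ : Form A (A × Val)) :
    M.sat X (φ.imp ψ) ↔ (M.sat X φ → M.sat X ψ) := by
  simp only [Form.imp, SModel.sat]; tauto

lemma sat_propEval {A V Val : Type} (M : SModel A V Val) (X : Set V)
    (φ : Form A (A × Val)) : propEval (M.sat X) φ ↔ M.sat X φ := by
  induction φ with
  | atom p => rfl
  | neg φ ih => simp [propEval, SModel.sat, ih]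
  | and φ ψ ih1 ih2 => simp [propEval, SModel.sat, ih1, ih2]
  | K a φ => rfl

/-- Soundness of `S5_n + Loc` with respect to the class of simplicial
models: every derivable formula is true at every facet of every simplicial model. -/
theorem statement6 {n : ℕ} {Val : Type} [Countable Val]
    (φ : Form (Fin (n+1)) (Fin (n+1) × Val)) (h : Prov φ) :
    ∀ (V : Type) (M : SModel (Fin (n+1)) V Val), M.toCSC.Pure n →
      ∀ X : Set V, M.toCSC.IsFacet X → M.sat X φ := by
  induction h with
  | taut h =>
    intro V M hp X hX
    exact (sat_propEval M X _).mp (h _)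
  | axK a φ ψ =>
    intro V M hp X hX
    rw [sat_imp]; intro h1
    rw [sat_imp]; intro h2
    intro Y hY hrel
    have := (sat_imp M Y φ ψ).mp (h1 Y hY hrel)
    exact this (h2 Y hY hrel)
  | axT a φ =>
    intro V M hp X hX
    rw [sat_imp]; intro h1
    obtain ⟨v, hv, hc⟩ := M.toCSC.facet_exists_color hp hX a
    exact h1 X hX ⟨v, ⟨hv, hv⟩, hc⟩
  | ax4 a φ =>
    intro V M hp X hX
    rw [sat_imp]; intro h1
    intro Y hY ⟨v, ⟨hvX, hvY⟩, hcv⟩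
    intro Z hZ ⟨w, ⟨hwY, hwZ⟩, hcw⟩
    have hvw : v = w := M.toCSC.chromatic Y hY.1 hvY hwY (by rw [hcv, hcw])
    exact h1 Z hZ ⟨v, ⟨hvX, hvw ▸ hwZ⟩, hcv⟩
  | ax5 a φ =>
    intro V M hp X hX
    rw [sat_imp]; intro h1
    intro Y hY ⟨v, ⟨hvX, hvY⟩, hcv⟩
    simp only [SModel.sat] at h1 ⊢
    intro hK
    apply h1
    intro Z hZ ⟨w, ⟨hwX, hwZ⟩, hcw⟩
    have hvw : v = w := M.toCSC.chromatic X hX.1 hvX hwX (by rw [hcv, hcw])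
    exact hK Z hZ ⟨v, ⟨hvY, hvw ▸ hwZ⟩, hcv⟩
  | axLoc a x =>
    intro V M hp X hX
    obtain ⟨v, hvX, hcv⟩ := M.toCSC.facet_exists_color hp hX a
    have hvert : M.toCSC.IsVertex v := M.toCSC.isVertex_of_mem hX.1 hvX
    simp only [Form.or, SModel.sat, not_and, not_not]
    intro h1
    by_cases hmem : ((a, x) : (Fin (n+1)) × Val) ∈ M.label v
    · exfalso
      apply h1
      intro Y hY ⟨w, ⟨hwX, hwY⟩, hcw⟩
      have : v = w := M.toCSC.chromatic X hX.1 hvX hwX (by rw [hcv, hcw])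
      exact ⟨v, this ▸ hwY, hmem⟩
    · intro Y hY ⟨w, ⟨hwX, hwY⟩, hcw⟩
      rintro ⟨u, huY, humem⟩
      have hcu : M.color u = a := (M.label_local u (M.toCSC.isVertex_of_mem hY.1 huY) _ humem).symm
      have hvw : v = w := M.toCSC.chromatic X hX.1 hvX hwX (by rw [hcv, hcw])
      have huw : u = w := M.toCSC.chromatic Y hY.1 huY hwY (by rw [hcu, hcw])
      exact hmem (by rw [hvw, ← huw]; exact humem)
  | mp h1 h2 ih1 ih2 =>
    intro V M hp X hX
    exact (sat_imp M X _ _).mp (ih1 V M hp X hX) (ih2 V M hp X hX)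
  | nec a h ih =>
    intro V M hp X hX
    intro Y hY _
    exact ih V M hp Y hY
end

section
/- The axiom system S5_n + Loc is complete with respect to the class of simplicial models: every formula of 𝓛_K that is true at every facet of every simplicial model is derivable in S5_n extended with the locality axioms Loc. -/
/-!
Canonical model argument. The worlds are the maximal consistent sets, and agent `a` cannot
distinguish `Γ` from `Δ` when everything `a` knows in `Γ` holds in `Δ`; by the `S5` axioms this is
an equivalence relation. The canonical simplicial model has as vertices of colour `a` the
`a`-classes of worlds, and each world `Γ` spans the facet formed by its `n+1` classes, so two
facets share an `a`-vertex exactly when `a` cannot distinguish their worlds. By the locality axiom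
an atom `p_{a,x}` is constant on `a`-classes, so it can be put on the label of the `a`-vertex. The
truth lemma then says that a formula holds at the facet of `Γ` iff it belongs to `Γ`, and a
formula that is not derivable is missing from some maximal consistent set.
-/

section Propositional

variable {A AP : Type}

@[simp]
lemma propEval_imp (b : Form A AP → Prop) (φ ψ : Form A AP) :
    propEval b (φ.imp ψ) ↔ (propEval b φ → propEval b ψ) := by
  simp only [Form.imp, propEval]; tauto

@[simp]
lemma propEval_or (b : Form A AP → Prop) (φ ψ : Form A AP) :
    propEval b (φ.or ψ) ↔ (propEval b φ ∨ propEval b ψ) := by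
  simp only [Form.or, propEval]; tauto

@[simp]
lemma propEval_foldr_imp (b : Form A AP → Prop) (l : List (Form A AP)) (φ : Form A AP) :
    propEval b (l.foldr Form.imp φ) ↔ ((∀ ψ ∈ l, propEval b ψ) → propEval b φ) := by
  induction l with
  | nil => simp
  | cons ψ l ih => simp [ih, and_imp]

lemma of_taut_of_mp_closed {P : Form A AP → Prop}
    (taut : ∀ φ, (∀ b, propEval b φ) → P φ) (mp : ∀ φ ψ, P (φ.imp ψ) → P φ → P ψ)
    {l : List (Form A AP)} {χ : Form A AP} (hl : ∀ ψ ∈ l, P ψ)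
    (h : ∀ b, (∀ ψ ∈ l, propEval b ψ) → propEval b χ) : P χ := by
  induction l generalizing χ with
  | nil => exact taut χ fun b => h b (by simp)
  | cons ψ l ih =>
    refine mp ψ χ (ih (fun θ hθ => hl θ (by simp [hθ])) fun b hb => ?_) (hl ψ (by simp))
    simpa using fun hψ => h b (List.forall_mem_cons.2 ⟨hψ, hb⟩)

end Propositional

section Derivability

variable {A Val : Type}

lemma Prov.of_taut {l : List (Form A (A × Val))} {χ : Form A (A × Val)} (hl : ∀ ψ ∈ l, Prov ψ)
    (h : ∀ b, (∀ ψ ∈ l, propEval b ψ) → propEval b χ) : Prov χ :=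
  of_taut_of_mp_closed (fun _ => Prov.taut) (fun _ _ => Prov.mp) hl h

def ProvFrom (Γ : Set (Form A (A × Val))) (φ : Form A (A × Val)) : Prop :=
  ∃ l : List (Form A (A × Val)), (∀ ψ ∈ l, ψ ∈ Γ) ∧ Prov (l.foldr Form.imp φ)

namespace ProvFrom

variable {Γ Δ : Set (Form A (A × Val))} {φ ψ χ : Form A (A × Val)}

lemma of_prov (h : Prov φ) : ProvFrom Γ φ := ⟨[], by simp, h⟩

lemma of_mem (h : φ ∈ Γ) : ProvFrom Γ φ :=
  ⟨[φ], by simpa using h, Prov.taut fun b => by simp⟩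

lemma mono (hΓΔ : Γ ⊆ Δ) : ProvFrom Γ φ → ProvFrom Δ φ
  | ⟨l, hl, hp⟩ => ⟨l, fun ψ hψ => hΓΔ (hl ψ hψ), hp⟩

lemma mp (h₁ : ProvFrom Γ (φ.imp ψ)) (h₂ : ProvFrom Γ φ) : ProvFrom Γ ψ := by
  obtain ⟨l₁, hl₁, hp₁⟩ := h₁
  obtain ⟨l₂, hl₂, hp₂⟩ := h₂
  refine ⟨l₁ ++ l₂, by simpa [or_imp, forall_and] using ⟨hl₁, hl₂⟩, ?_⟩
  refine Prov.of_taut (l := [l₁.foldr Form.imp (φ.imp ψ), l₂.foldr Form.imp φ])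
    (by simp [hp₁, hp₂]) fun b => ?_
  simp only [List.forall_mem_cons, propEval_foldr_imp, propEval_imp, List.forall_mem_append]
  tauto

lemma of_taut {l : List (Form A (A × Val))} (hl : ∀ ψ ∈ l, ProvFrom Γ ψ)
    (h : ∀ b, (∀ ψ ∈ l, propEval b ψ) → propEval b χ) : ProvFrom Γ χ :=
  of_taut_of_mp_closed (fun _ hφ => of_prov (Prov.taut hφ)) (fun _ _ => mp) hl h

lemma prov_of_empty (h : ProvFrom ∅ φ) : Prov φ := by
  obtain ⟨l, hl, hp⟩ := h
  obtain rfl : l = [] := List.eq_nil_iff_forall_not_mem.2 hl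
  exact hp

open Classical in
/-- The deduction theorem. -/
lemma imp_of_insert (h : ProvFrom (insert φ Γ) ψ) : ProvFrom Γ (φ.imp ψ) := by
  obtain ⟨l, hl, hp⟩ := h
  refine ⟨l.filter (· ≠ φ), fun χ hχ => ?_, Prov.of_taut (l := [_]) (by simpa using hp) ?_⟩
  · obtain ⟨hχl, hχφ⟩ := List.mem_filter.1 hχ
    exact (Set.mem_insert_iff.1 (hl χ hχl)).resolve_left (by simpa using hχφ)
  · intro b
    simp only [List.forall_mem_cons, propEval_foldr_imp, propEval_imp, List.mem_filter]
    rintro ⟨himp, -⟩ hrest hφ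
    exact himp fun χ hχ => if hχφ : χ = φ then hχφ ▸ hφ else hrest χ ⟨hχ, by simpa using hχφ⟩

end ProvFrom

def Consistent (Γ : Set (Form A (A × Val))) : Prop :=
  ∀ φ : Form A (A × Val), ¬ ProvFrom Γ (φ.and φ.neg)

namespace ProvFrom

variable {Γ : Set (Form A (A × Val))} {φ : Form A (A × Val)}

lemma neg_of_not_consistent_insert (h : ¬ Consistent (insert φ Γ)) : ProvFrom Γ φ.neg := by
  simp only [Consistent, not_forall, not_not] at h
  obtain ⟨χ, hχ⟩ := h
  refine .of_taut (l := [φ.imp (χ.and χ.neg)]) (by simpa using hχ.imp_of_insert) fun b => ?_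
  simp [propEval]

lemma of_not_consistent_insert_neg (h : ¬ Consistent (insert φ.neg Γ)) : ProvFrom Γ φ :=
  .of_taut (l := [φ.neg.neg]) (by simpa using neg_of_not_consistent_insert h) fun b => by
    simp [propEval]

lemma not_consistent (h₁ : ProvFrom Γ φ) (h₂ : ProvFrom Γ φ.neg) :
    ¬ Consistent Γ :=
  fun hΓ => hΓ φ (.of_taut (l := [φ, φ.neg]) (by simp [h₁, h₂]) fun b => by simp [propEval])

end ProvFrom

lemma isOfFiniteCharacter_consistent :
    Order.IsOfFiniteCharacter {Γ : Set (Form A (A × Val)) | Consistent Γ} := fun Γ => by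
  refine ⟨fun h Δ hΔ _ φ hφ => h φ (hφ.mono hΔ), fun h φ ⟨l, hl, hp⟩ => ?_⟩
  exact h {ψ | ψ ∈ l} hl l.finite_toSet φ ⟨l, fun _ => id, hp⟩

def MaximalConsistent (Γ : Set (Form A (A × Val))) : Prop :=
  Consistent Γ ∧ ∀ φ, φ ∈ Γ ∨ φ.neg ∈ Γ

/-- Lindenbaum's lemma. -/
lemma Consistent.exists_maximalConsistent_superset {Γ : Set (Form A (A × Val))}
    (h : Consistent Γ) : ∃ Δ, Γ ⊆ Δ ∧ MaximalConsistent Δ := by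
  obtain ⟨Δ, hΓΔ, hΔ⟩ := Order.IsOfFiniteCharacter.exists_maximal
    isOfFiniteCharacter_consistent h
  refine ⟨Δ, hΓΔ, hΔ.prop, fun φ => ?_⟩
  by_contra! hφ
  have hinsert {ψ} (hψ : ψ ∉ Δ) : ¬ Consistent (insert ψ Δ) := fun hc =>
    hψ (hΔ.eq_of_subset hc (Set.subset_insert ψ Δ) ▸ Set.mem_insert ψ Δ)
  exact ProvFrom.not_consistent
    (.of_not_consistent_insert_neg (hinsert hφ.2)) (.neg_of_not_consistent_insert (hinsert hφ.1))
    hΔ.prop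

end Derivability

namespace MaximalConsistent

variable {A Val : Type} {Γ : Set (Form A (A × Val))} {φ ψ : Form A (A × Val)}

lemma mem_of_provFrom (hΓ : MaximalConsistent Γ) (h : ProvFrom Γ φ) : φ ∈ Γ :=
  (hΓ.2 φ).resolve_right fun hn => ProvFrom.not_consistent h (.of_mem hn) hΓ.1

lemma mem_of_prov (hΓ : MaximalConsistent Γ) (h : Prov φ) : φ ∈ Γ :=
  hΓ.mem_of_provFrom (.of_prov h)

lemma mem_of_taut (hΓ : MaximalConsistent Γ) {l : List (Form A (A × Val))} (hl : ∀ ψ ∈ l, ψ ∈ Γ)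
    (h : ∀ b, (∀ ψ ∈ l, propEval b ψ) → propEval b φ) : φ ∈ Γ :=
  hΓ.mem_of_provFrom (.of_taut (fun ψ hψ => .of_mem (hl ψ hψ)) h)

lemma neg_mem_iff (hΓ : MaximalConsistent Γ) : φ.neg ∈ Γ ↔ φ ∉ Γ :=
  ⟨fun hn h => ProvFrom.not_consistent (.of_mem h) (.of_mem hn) hΓ.1,
    (hΓ.2 φ).resolve_left⟩

lemma and_mem_iff (hΓ : MaximalConsistent Γ) : φ.and ψ ∈ Γ ↔ φ ∈ Γ ∧ ψ ∈ Γ := by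
  refine ⟨fun h => ⟨?_, ?_⟩, fun h => ?_⟩
  · exact hΓ.mem_of_taut (l := [φ.and ψ]) (by simpa using h) fun b => by simp +contextual [propEval]
  · exact hΓ.mem_of_taut (l := [φ.and ψ]) (by simpa using h) fun b => by simp +contextual [propEval]
  · exact hΓ.mem_of_taut (l := [φ, ψ]) (by simpa using h) fun b => by simp +contextual [propEval]

lemma mp (hΓ : MaximalConsistent Γ) (himp : φ.imp ψ ∈ Γ) (h : φ ∈ Γ) : ψ ∈ Γ :=
  hΓ.mem_of_taut (l := [φ.imp ψ, φ]) (by simp [himp, h]) fun b => by simp +contextual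

lemma mem_of_K_mem {a : A} (hΓ : MaximalConsistent Γ) (h : Form.K a φ ∈ Γ) : φ ∈ Γ :=
  hΓ.mp (hΓ.mem_of_prov (Prov.axT a φ)) h

lemma K_mem_of_K_imp_mem {a : A} (hΓ : MaximalConsistent Γ) (himp : Form.K a (φ.imp ψ) ∈ Γ)
    (h : Form.K a φ ∈ Γ) : Form.K a ψ ∈ Γ :=
  hΓ.mp (hΓ.mp (hΓ.mem_of_prov (Prov.axK a φ ψ)) himp) h

lemma K_mem_of_provFrom {a : A} (hΓ : MaximalConsistent Γ)
    (h : ProvFrom {ψ | Form.K a ψ ∈ Γ} φ) : Form.K a φ ∈ Γ := by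
  obtain ⟨l, hl, hp⟩ := h
  have hK : Form.K a (l.foldr Form.imp φ) ∈ Γ := hΓ.mem_of_prov (Prov.nec a hp)
  clear hp
  induction l with
  | nil => exact hK
  | cons ψ l ih =>
    exact ih (fun θ hθ => hl θ (by simp [hθ])) (hΓ.K_mem_of_K_imp_mem hK (hl ψ (by simp)))

end MaximalConsistent

def CanonicalWorld (A Val : Type) : Type :=
  {Γ : Set (Form A (A × Val)) // MaximalConsistent Γ}

namespace CanonicalWorld

variable {A Val : Type}

lemma exists_notMem_of_not_prov {φ : Form A (A × Val)} (h : ¬ Prov φ) :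
    ∃ s : CanonicalWorld A Val, φ ∉ s.1 := by
  have hcons : Consistent {φ.neg} := by
    by_contra hc
    exact h (ProvFrom.of_not_consistent_insert_neg (Γ := ∅) (by simpa using hc)).prov_of_empty
  obtain ⟨Δ, hsub, hΔ⟩ := hcons.exists_maximalConsistent_superset
  exact ⟨⟨Δ, hΔ⟩, hΔ.neg_mem_iff.1 (hsub rfl)⟩

def Rel (a : A) (s t : CanonicalWorld A Val) : Prop :=
  ∀ φ, Form.K a φ ∈ s.1 → φ ∈ t.1

lemma K_mem_iff_forall_rel {a : A} {φ : Form A (A × Val)} {s : CanonicalWorld A Val} :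
    Form.K a φ ∈ s.1 ↔ ∀ t, Rel a s t → φ ∈ t.1 := by
  refine ⟨fun h t hst => hst φ h, fun h => ?_⟩
  by_contra hK
  have hcons : Consistent (insert φ.neg {ψ | Form.K a ψ ∈ s.1}) := by
    by_contra hc
    exact hK (s.2.K_mem_of_provFrom (.of_not_consistent_insert_neg hc))
  obtain ⟨Δ, hsub, hΔ⟩ := hcons.exists_maximalConsistent_superset
  exact hΔ.neg_mem_iff.1 (hsub (Set.mem_insert _ _))
    (h ⟨Δ, hΔ⟩ fun ψ hψ => hsub (Set.mem_insert_of_mem _ hψ))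

lemma rel_equivalence (a : A) : Equivalence (Rel (Val := Val) a) where
  refl s φ := s.2.mem_of_K_mem
  symm {s t} hst φ hφ := by
    by_contra hφs
    have hnK : (Form.K a φ).neg ∈ s.1 := s.2.neg_mem_iff.2 fun hK => hφs (s.2.mem_of_K_mem hK)
    have hKnK : Form.K a (Form.K a φ).neg ∈ s.1 := s.2.mp (s.2.mem_of_prov (Prov.ax5 a φ)) hnK
    exact t.2.neg_mem_iff.1 (hst _ hKnK) hφ
  trans {s t u} hst htu φ hφ := htu φ (hst _ (s.2.mp (s.2.mem_of_prov (Prov.ax4 a φ)) hφ))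

lemma Rel.atom_mem {a : A} {x : Val} {s t : CanonicalWorld A Val} (hst : Rel a s t)
    (hx : Form.atom (a, x) ∈ s.1) : Form.atom (a, x) ∈ t.1 := by
  by_cases hK : Form.K a (Form.atom (a, x)) ∈ s.1
  · exact hst _ hK
  have hKneg : Form.K a (Form.atom (a, x)).neg ∈ s.1 :=
    s.2.mem_of_taut (l := [(Form.K a (Form.atom (a, x))).or (Form.K a (Form.atom (a, x)).neg),
        (Form.K a (Form.atom (a, x))).neg])
      (by simp [s.2.mem_of_prov (Prov.axLoc a x), s.2.neg_mem_iff.2 hK]) fun b => by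
        simp [propEval]; tauto
  exact absurd hx (s.2.neg_mem_iff.1 (s.2.mem_of_K_mem hKneg))

def relSetoid (a : A) : Setoid (CanonicalWorld A Val) := ⟨Rel a, rel_equivalence a⟩

end CanonicalWorld

namespace CanonicalModel

open CanonicalWorld

variable {A Val : Type}

variable (A Val) in
/-- A vertex of colour `a` is a local state of agent `a`: a class of worlds modulo `Rel a`. -/
abbrev Vertex : Type := Σ a : A, Quotient (relSetoid (Val := Val) a)

def facet (s : CanonicalWorld A Val) : Set (Vertex A Val) :=
  {v | v.2 = Quotient.mk (relSetoid v.1) s}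

lemma facet_eq_range (s : CanonicalWorld A Val) :
    facet s = Set.range fun a : A => (⟨a, Quotient.mk (relSetoid a) s⟩ : Vertex A Val) := by
  ext v
  constructor
  · exact fun hv => ⟨v.1, Sigma.ext rfl (heq_of_eq hv.symm)⟩
  · rintro ⟨a, rfl⟩
    rfl

lemma eq_of_mem_facet {s : CanonicalWorld A Val} {v w : Vertex A Val} (hv : v ∈ facet s)
    (hw : w ∈ facet s) (hvw : v.1 = w.1) : v = w := by
  obtain ⟨a, p⟩ := v
  obtain ⟨b, q⟩ := w
  obtain rfl : a = b := hvw
  obtain rfl : p = q := hv.trans hw.symm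
  rfl

lemma exists_mem_facet_inter_iff {a : A} {s t : CanonicalWorld A Val} :
    (∃ v, v ∈ facet s ∩ facet t ∧ v.1 = a) ↔ Rel a s t := by
  constructor
  · rintro ⟨⟨b, q⟩, ⟨hs, ht⟩, rfl⟩
    exact Quotient.exact (hs.symm.trans ht)
  · intro hst
    exact ⟨⟨a, Quotient.mk _ s⟩, ⟨rfl, Quotient.sound hst⟩, rfl⟩

lemma eq_of_facet_subset {s t : CanonicalWorld A Val} (h : facet s ⊆ facet t) :
    facet s = facet t := by
  refine h.antisymm fun v hv => ?_
  have hst : Rel v.1 s t := exists_mem_facet_inter_iff.1 ⟨⟨v.1, Quotient.mk _ s⟩, ⟨rfl, h rfl⟩, rfl⟩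
  exact hv.trans (Quotient.sound hst).symm

variable (A Val) in
def model [Finite A] : SModel A (Vertex A Val) Val where
  simplexes := {X | X.Nonempty ∧ ∃ s, X ⊆ facet s}
  nonempty_mem _ hX := hX.1
  finite_mem X hX := by
    obtain ⟨s, hs⟩ := hX.2
    exact (facet_eq_range s ▸ Set.finite_range _).subset hs
  down_closed X hX Y hYX hY := ⟨hY, hX.2.imp fun _ hs => hYX.trans hs⟩
  color := Sigma.fst
  chromatic X hX := by
    obtain ⟨s, hs⟩ := hX.2
    exact fun v hv w hw => eq_of_mem_facet (hs hv) (hs hw)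
  label v := {p | p.1 = v.1 ∧ ∃ s, v.2 = Quotient.mk _ s ∧ Form.atom p ∈ s.1}
  label_local _ _ _ hp := hp.1

variable [Finite A] [Nonempty A]

lemma isFacet_facet (s : CanonicalWorld A Val) : (model A Val).IsFacet (facet s) := by
  refine ⟨⟨⟨⟨Classical.arbitrary A, Quotient.mk _ s⟩, rfl⟩, s, subset_rfl⟩, fun Y hY hsY => ?_⟩
  obtain ⟨t, htY⟩ := hY.2
  exact hsY.antisymm (htY.trans (eq_of_facet_subset (hsY.trans htY)).symm.subset)

lemma isFacet_iff {X : Set (Vertex A Val)} : (model A Val).IsFacet X ↔ ∃ s, X = facet s := by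
  refine ⟨fun hX => ?_, ?_⟩
  · obtain ⟨s, hs⟩ := hX.1.2
    exact ⟨s, hX.2 _ (isFacet_facet s).1 hs⟩
  · rintro ⟨s, rfl⟩
    exact isFacet_facet s

lemma pure {n : ℕ} : (model (Fin (n+1)) Val).Pure n := by
  intro X hX
  obtain ⟨s, rfl⟩ := isFacet_iff.1 hX
  rw [facet_eq_range, Set.ncard_range_of_injective fun a b h => congrArg Sigma.fst h]
  simp

/-- The truth lemma. -/
lemma sat_facet_iff (φ : Form A (A × Val)) (s : CanonicalWorld A Val) :
    (model A Val).sat (facet s) φ ↔ φ ∈ s.1 := by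
  induction φ generalizing s with
  | atom p =>
    constructor
    · rintro ⟨v, hv, hpv, t, ht, hpt⟩
      have hts : Rel v.1 t s := Quotient.exact (ht.symm.trans hv)
      exact Rel.atom_mem (x := p.2) (hpv ▸ hts) hpt
    · exact fun hp => ⟨⟨p.1, Quotient.mk _ s⟩, rfl, rfl, s, rfl, hp⟩
  | neg φ ih => exact (ih s).not.trans s.2.neg_mem_iff.symm
  | and φ ψ ihφ ihψ => exact (and_congr (ihφ s) (ihψ s)).trans s.2.and_mem_iff.symm
  | K a φ ih =>
    rw [K_mem_iff_forall_rel]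
    constructor
    · exact fun h t hst => (ih t).1 (h _ (isFacet_facet t) (exists_mem_facet_inter_iff.2 hst))
    · rintro h Y hY hsY
      obtain ⟨t, rfl⟩ := isFacet_iff.1 hY
      exact (ih t).2 (h t (exists_mem_facet_inter_iff.1 hsY))

end CanonicalModel

theorem statement7_general {n : ℕ} {Val : Type}
    (φ : Form (Fin (n+1)) (Fin (n+1) × Val))
    (h : ∀ (V : Type) (M : SModel (Fin (n+1)) V Val), M.toCSC.Pure n →
      ∀ X : Set V, M.toCSC.IsFacet X → M.sat X φ) :
    Prov φ := by
  by_contra hφ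
  obtain ⟨s, hs⟩ := CanonicalWorld.exists_notMem_of_not_prov hφ
  exact hs ((CanonicalModel.sat_facet_iff φ s).1
    (h _ _ CanonicalModel.pure _ (CanonicalModel.isFacet_facet s)))

/-- Completeness of `S5_n + Loc` with respect to the class of simplicial
models: every formula true at every facet of every simplicial model is derivable. -/
theorem statement7 {n : ℕ} {Val : Type} [Countable Val]
    (φ : Form (Fin (n+1)) (Fin (n+1) × Val))
    (h : ∀ (V : Type) (M : SModel (Fin (n+1)) V Val), M.toCSC.Pure n →
      ∀ X : Set V, M.toCSC.IsFacet X → M.sat X φ) :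
    Prov φ :=
  statement7_general φ h
end

section
/- Morphisms of simplicial models cannot gain knowledge: if f : M → M' is a morphism of simplicial models, X is a facet of M, and φ is a formula of 𝓛_K in which negations occur only (if at all) directly in front of atomic propositions, then M', f(X) ⊨ φ implies M, X ⊨ φ. -/
/-- Positive formulas: negations occur only (if at all) directly in front of atomic
propositions. -/
inductive Positive {A AP : Type} : Form A AP → Prop
  | atom (p : AP) : Positive (.atom p)
  | negAtom (p : AP) : Positive (.neg (.atom p))
  | and {φ ψ} : Positive φ → Positive ψ → Positive (.and φ ψ)
  | K (a : A) {φ} : Positive φ → Positive (.K a φ)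


/-- A chromatic map between pure complexes of dimension `n` maps facets to facets. -/
lemma facet_image {n : ℕ} {V W : Type} (C : CSC (Fin (n+1)) V) (D : CSC (Fin (n+1)) W)
    (hpC : C.Pure n) (hpD : D.Pure n) (f : V → W) (hf : C.IsChromMap D f)
    {X : Set V} (hX : C.IsFacet X) : D.IsFacet (f '' X) := by
  have hXs := hX.1
  have himg : f '' X ∈ D.simplexes := hf.1 X hXs
  have hinj : Set.InjOn f X := by
    intro u hu v hv huv
    apply C.chromatic X hXs hu hv
    rw [← hf.2 u (C.isVertex_of_mem hXs hu), ← hf.2 v (C.isVertex_of_mem hXs hv), huv]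
  have hcard : (f '' X).ncard = n + 1 := by
    rw [Set.ncard_image_of_injOn hinj]; exact hpC X hX
  obtain ⟨Y, hY, hXY⟩ := D.mem_facet himg
  have : f '' X = Y := Set.eq_of_subset_of_ncard_le hXY
    (by rw [hcard, hpD Y hY]) (D.finite_mem Y hY.1)
  rwa [this]

/-- Morphisms of simplicial models cannot gain knowledge: if
`f : M → M'` is a morphism of simplicial models, `X` a facet of `M`, and `φ` a positive
formula, then `M', f(X) ⊨ φ` implies `M, X ⊨ φ`. -/
theorem statement8 {n : ℕ} {V W Val : Type}
    (M : SModel (Fin (n+1)) V Val) (M' : SModel (Fin (n+1)) W Val)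
    (hpM : M.toCSC.Pure n) (hpM' : M'.toCSC.Pure n)
    (f : V → W) (hf : M.IsMorphism M' f)
    (X : Set V) (hX : M.toCSC.IsFacet X)
    (φ : Form (Fin (n+1)) (Fin (n+1) × Val)) (hφ : Positive φ) :
    M'.sat (f '' X) φ → M.sat X φ := by
  
  induction hφ generalizing X with
  | atom p =>
    rintro ⟨w, ⟨v, hv, rfl⟩, hp⟩
    exact ⟨v, hv, by rwa [hf.2 v (M.toCSC.isVertex_of_mem hX.1 hv)] at hp⟩
  | negAtom p =>
    rintro h ⟨v, hv, hp⟩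
    exact h ⟨f v, ⟨v, hv, rfl⟩, by rwa [hf.2 v (M.toCSC.isVertex_of_mem hX.1 hv)]⟩
  | and hφ hψ ihφ ihψ =>
    rintro ⟨h1, h2⟩
    exact ⟨ihφ X hX h1, ihψ X hX h2⟩
  | K a hφ ih =>
    rintro h Y hY ⟨v, ⟨hvX, hvY⟩, hc⟩
    refine ih Y hY (h (f '' Y) (facet_image _ _ hpM hpM' f hf.1 hY) ?_)
    exact ⟨f v, ⟨⟨v, hvX, rfl⟩, ⟨v, hvY, rfl⟩⟩,
      by rw [hf.1.2 v (M.toCSC.isVertex_of_mem hX.1 hvX)]; exact hc⟩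
end

section
/- Morphisms of simplicial models cannot gain common knowledge: if f : M → M' is a morphism of simplicial models, X is a facet of M, B ⊆ A is a group of agents, and φ is a formula in which negations occur only directly in front of atomic propositions, then M', f(X) ⊨ C_B φ implies M, X ⊨ C_B φ; likewise for group knowledge E_B φ = ⋀_{b∈B} K_b φ. -/
/-! ### Group knowledge, common knowledge, reachability -/

namespace SModel

variable {A V Val : Type}

/-- Two facets are one `B`-step apart if they share a vertex colored by an agent of `B`. -/
def BStep (M : SModel A V Val) (B : Set A) (X Y : Set V) : Prop :=
  M.toCSC.IsFacet X ∧ M.toCSC.IsFacet Y ∧ ∃ v, v ∈ X ∩ Y ∧ M.color v ∈ B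

/-- Satisfaction of common knowledge `C_B φ` at `X`: `φ` holds at every facet
`B`-reachable from `X`. -/
def CSat (M : SModel A V Val) (B : Set A) (X : Set V) (φ : Form A (A × Val)) : Prop :=
  ∀ Y, Relation.ReflTransGen (M.BStep B) X Y → M.sat Y φ

/-- Satisfaction of group knowledge `E_B φ = ⋀_{b ∈ B} K_b φ` at `X`. -/
def ESat (M : SModel A V Val) (B : Set A) (X : Set V) (φ : Form A (A × Val)) : Prop :=
  ∀ b ∈ B, ∀ Y, M.toCSC.IsFacet Y → (∃ v, v ∈ X ∩ Y ∧ M.color v = b) → M.sat Y φ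

end SModel

/-! ### Auxiliary lemmas -/

section Aux

variable {n : ℕ} {V W Val : Type}

lemma facet_image_s9 {M : SModel (Fin (n+1)) V Val} {M' : SModel (Fin (n+1)) W Val}
    (hpM : M.toCSC.Pure n) (hpM' : M'.toCSC.Pure n)
    {f : V → W} (hf : M.IsMorphism M' f)
    {Y : Set V} (hY : M.toCSC.IsFacet Y) : M'.toCSC.IsFacet (f '' Y) := by
  have hsimp : f '' Y ∈ M'.toCSC.simplexes := hf.1.1 Y hY.1
  have hinj : Set.InjOn f Y := by
    intro u hu v hv huv
    apply M.toCSC.chromatic Y hY.1 hu hv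
    rw [← hf.1.2 u (M.toCSC.isVertex_of_mem hY.1 hu),
        ← hf.1.2 v (M.toCSC.isVertex_of_mem hY.1 hv), huv]
  have hcard : (f '' Y).ncard = n + 1 := by
    rw [Set.ncard_image_of_injOn hinj]; exact hpM Y hY
  obtain ⟨Z, hZ, hsub⟩ := M'.toCSC.mem_facet hsimp
  have : f '' Y = Z := Set.eq_of_subset_of_ncard_le hsub
    (by rw [hcard, hpM' Z hZ]) (M'.toCSC.finite_mem Z hZ.1)
  exact this ▸ hZ

lemma sat_morphism {M : SModel (Fin (n+1)) V Val} {M' : SModel (Fin (n+1)) W Val}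
    (hpM : M.toCSC.Pure n) (hpM' : M'.toCSC.Pure n)
    {f : V → W} (hf : M.IsMorphism M' f)
    {φ : Form (Fin (n+1)) (Fin (n+1) × Val)} (hφ : Positive φ) :
    ∀ {Y : Set V}, M.toCSC.IsFacet Y → M'.sat (f '' Y) φ → M.sat Y φ := by
  induction hφ with
  | atom p =>
    rintro Y hY ⟨w, ⟨v, hv, rfl⟩, hp⟩
    exact ⟨v, hv, by rwa [hf.2 v (M.toCSC.isVertex_of_mem hY.1 hv)] at hp⟩
  | negAtom p =>
    rintro Y hY h ⟨v, hv, hp⟩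
    exact h ⟨f v, ⟨v, hv, rfl⟩, by rwa [hf.2 v (M.toCSC.isVertex_of_mem hY.1 hv)]⟩
  | and h1 h2 ih1 ih2 =>
    rintro Y hY ⟨ha, hb⟩
    exact ⟨ih1 hY ha, ih2 hY hb⟩
  | K a h ih =>
    rintro Y hY hK Z hZ ⟨v, ⟨hvY, hvZ⟩, hc⟩
    refine ih hZ (hK (f '' Z) (facet_image_s9 hpM hpM' hf hZ)
      ⟨f v, ⟨⟨v, hvY, rfl⟩, ⟨v, hvZ, rfl⟩⟩, ?_⟩)
    rw [hf.1.2 v (M.toCSC.isVertex_of_mem hY.1 hvY), hc]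

end Aux

/-- Morphisms of simplicial models cannot gain common knowledge nor group
knowledge: if `f : M → M'` is a morphism of simplicial models, `X` a facet of `M`,
`B ⊆ A` a group of agents, and `φ` a positive formula, then `M', f(X) ⊨ C_B φ` implies
`M, X ⊨ C_B φ`, and likewise for `E_B φ`. -/
theorem statement9 {n : ℕ} {V W Val : Type}
    (M : SModel (Fin (n+1)) V Val) (M' : SModel (Fin (n+1)) W Val)
    (hpM : M.toCSC.Pure n) (hpM' : M'.toCSC.Pure n)
    (f : V → W) (hf : M.IsMorphism M' f)
    (X : Set V) (hX : M.toCSC.IsFacet X) (B : Set (Fin (n+1)))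
    (φ : Form (Fin (n+1)) (Fin (n+1) × Val)) (hφ : Positive φ) :
    (M'.CSat B (f '' X) φ → M.CSat B X φ) ∧
    (M'.ESat B (f '' X) φ → M.ESat B X φ) := by
  
  constructor
  · intro h Y hreach
    have hY : M.toCSC.IsFacet Y := by
      induction hreach with
      | refl => exact hX
      | tail _ hstep _ => exact hstep.2.1
    apply sat_morphism hpM hpM' hf hφ hY
    apply h
    clear hY
    induction hreach with
    | refl => exact Relation.ReflTransGen.refl
    | tail hr hstep ih =>
      rename_i Z Z'
      refine ih.tail ⟨facet_image_s9 hpM hpM' hf hstep.1,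
        facet_image_s9 hpM hpM' hf hstep.2.1, ?_⟩
      obtain ⟨v, ⟨h1, h2⟩, hc⟩ := hstep.2.2
      refine ⟨f v, ⟨⟨v, h1, rfl⟩, ⟨v, h2, rfl⟩⟩, ?_⟩
      rwa [hf.1.2 v (M.toCSC.isVertex_of_mem hstep.1.1 h1)]
  · intro h b hb Y hY hvex
    apply sat_morphism hpM hpM' hf hφ hY
    obtain ⟨v, ⟨h1, h2⟩, hc⟩ := hvex
    refine h b hb (f '' Y) (facet_image_s9 hpM hpM' hf hY)
      ⟨f v, ⟨⟨v, h1, rfl⟩, ⟨v, h2, rfl⟩⟩, ?_⟩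
    rw [hf.1.2 v (M.toCSC.isVertex_of_mem hX.1 h1), hc]
end

section
/- In a strongly connected simplicial model, there can be no common knowledge of a non-valid fact: if M is a simplicial model whose underlying complex is strongly connected and some facet Y of M satisfies M, Y ⊭ φ, then for every facet X of M, M, X ⊭ C_A φ, where C_A is common knowledge among all agents. -/
/-! ### Strong connectivity -/

/-- Two facets of a pure `n`-dimensional complex are strongly adjacent if they share an
`(n-1)`-dimensional face, i.e. a simplex with `n` vertices. -/
def CSC.StrongStep {A V : Type} (C : CSC A V) (n : ℕ) (X Y : Set V) : Prop :=
  C.IsFacet X ∧ C.IsFacet Y ∧ ∃ Z ∈ C.simplexes, Z ⊆ X ∩ Y ∧ Z.ncard = n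

/-- A pure complex of dimension `n` is strongly connected if any two facets are joined by
a sequence of facets in which consecutive facets share an `(n-1)`-dimensional face. -/
def CSC.StronglyConnected {A V : Type} (C : CSC A V) (n : ℕ) : Prop :=
  ∀ X Y, C.IsFacet X → C.IsFacet Y → Relation.ReflTransGen (C.StrongStep n) X Y

/-! Facets sharing an `(n-1)`-face share in particular a vertex, so strong connectivity makes
every facet reachable from every other one through shared vertices. Common knowledge of `φ`
among all agents at a single facet therefore forces `φ` at every facet. -/

namespace SModel

variable {A V Val : Type} (M : SModel A V Val)

lemma bStep_univ_of_strongStep {n : ℕ} {X Y : Set V} (h : M.toCSC.StrongStep n X Y) :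
    M.BStep Set.univ X Y := by
  obtain ⟨hX, hY, Z, hZ, hZXY, -⟩ := h
  obtain ⟨v, hv⟩ := M.nonempty_mem Z hZ
  exact ⟨hX, hY, v, hZXY hv, Set.mem_univ _⟩

lemma reflTransGen_bStep_univ_of_stronglyConnected {n : ℕ}
    (hsc : M.toCSC.StronglyConnected n) {X Y : Set V} (hX : M.IsFacet X) (hY : M.IsFacet Y) :
    Relation.ReflTransGen (M.BStep Set.univ) X Y :=
  Relation.ReflTransGen.mono (fun _ _ ↦ M.bStep_univ_of_strongStep) _ _ (hsc X Y hX hY)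

lemma sat_of_cSat_univ_of_stronglyConnected {n : ℕ} (hsc : M.toCSC.StronglyConnected n)
    {X Y : Set V} (hX : M.IsFacet X) (hY : M.IsFacet Y) {φ : Form A (A × Val)}
    (hC : M.CSat Set.univ X φ) : M.sat Y φ :=
  hC Y (M.reflTransGen_bStep_univ_of_stronglyConnected hsc hX hY)

end SModel

theorem statement13_general {n : ℕ} {V Val : Type} (M : SModel (Fin (n+1)) V Val)
    (hsc : M.toCSC.StronglyConnected n)
    (φ : Form (Fin (n+1)) (Fin (n+1) × Val))
    (Y₀ : Set V) (hY₀ : M.toCSC.IsFacet Y₀) (hφ : ¬ M.sat Y₀ φ) :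
    ∀ X, M.toCSC.IsFacet X → ¬ M.CSat Set.univ X φ :=
  fun _ hX hC ↦ hφ (M.sat_of_cSat_univ_of_stronglyConnected hsc hX hY₀ hC)

/-- In a strongly connected simplicial model there can be no common
knowledge of a non-valid fact: if some facet `Y₀` does not satisfy `φ`, then no facet
satisfies `C_A φ`, common knowledge of `φ` among all agents. -/
theorem statement13 {n : ℕ} {V Val : Type} (M : SModel (Fin (n+1)) V Val)
    (hp : M.toCSC.Pure n) (hsc : M.toCSC.StronglyConnected n)
    (φ : Form (Fin (n+1)) (Fin (n+1) × Val))
    (Y₀ : Set V) (hY₀ : M.toCSC.IsFacet Y₀) (hφ : ¬ M.sat Y₀ φ) :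
    ∀ X, M.toCSC.IsFacet X → ¬ M.CSat Set.univ X φ :=
  statement13_general M hsc φ Y₀ hY₀ hφ
end

section
/- In the product update of the binary input model with the binary consensus task, the decided value is commonly known to be someone's input: the underlying complex of I[𝒯] is the disjoint union of I_0 × X_0 and I_1 × X_1, and for i ∈ {0,1}, every facet Y of I_i × X_i satisfies I[𝒯], Y ⊨ C_A φ_i, where φ_i is the formula asserting that at least one agent has input value i. -/
/-! ### Chromatic products -/

/-- The chromatic product of a set of vertices of `V` and a set of vertices of `W`:
pairs of vertices with matching colors. -/
def chromPair {A V W : Type} (cV : V → A) (cW : W → A) (X : Set V) (Y : Set W) :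
    Set (V × W) :=
  {p | p.1 ∈ X ∧ p.2 ∈ Y ∧ cV p.1 = cW p.2}

/-- The chromatic product of two facets of pure complexes over `n+1` agents has `n+1`
elements. -/
lemma CSC.ncard_chromPair {n : ℕ} {V W : Type} (C : CSC (Fin (n+1)) V)
    (D : CSC (Fin (n+1)) W) (hpC : C.Pure n) (hpD : D.Pure n)
    {X : Set V} {Y : Set W} (hX : C.IsFacet X) (hY : D.IsFacet Y) :
    (chromPair C.color D.color X Y).ncard = n + 1 := by
  have hinj : Set.InjOn Prod.fst (chromPair C.color D.color X Y) := by
    rintro p ⟨hp1, hp2, hpc⟩ q ⟨hq1, hq2, hqc⟩ h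
    have h2 : p.2 = q.2 := D.chromatic Y hY.1 hp2 hq2 (by rw [← hpc, ← hqc, h])
    exact Prod.ext h h2
  have himg : Prod.fst '' chromPair C.color D.color X Y = X := by
    apply Set.Subset.antisymm
    · rintro u ⟨p, hp, rfl⟩
      exact hp.1
    · intro u hu
      obtain ⟨w, hw, hcw⟩ := D.facet_exists_color hpD hY (C.color u)
      exact ⟨(u, w), ⟨hu, hw, hcw.symm⟩, rfl⟩
  rw [← Set.ncard_image_of_injOn hinj, himg]
  exact hpC X hX

lemma CSC.chromPair_nonempty {n : ℕ} {V W : Type} (C : CSC (Fin (n+1)) V)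
    (D : CSC (Fin (n+1)) W) (hpD : D.Pure n)
    {X : Set V} {Y : Set W} (hX : C.IsFacet X) (hY : D.IsFacet Y) :
    (chromPair C.color D.color X Y).Nonempty := by
  obtain ⟨u, hu⟩ := C.nonempty_mem X hX.1
  obtain ⟨w, hw, hcw⟩ := D.facet_exists_color hpD hY (C.color u)
  exact ⟨(u, w), hu, hw, hcw.symm⟩

/-! ### Simplicial action models and the simplicial product update -/

/-- A simplicial action model: a chromatic simplicial complex of actions together with a
precondition formula for each facet. -/
structure SActModel (A W Val : Type) extends CSC A W where
  pre : Set W → Form A (A × Val)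

/-- The product update of a simplicial model `M` with a simplicial action model `Act`:
the subcomplex of the chromatic cartesian product induced by the products `X × Y` of a
facet `X` of `M` and a facet (action) `Y` of `Act` such that `pre(Y)` holds at `X`.
Labels are inherited from the first component. -/
def SModel.update {A V W Val : Type} (M : SModel A V Val) (Act : SActModel A W Val) :
    SModel A (V × W) Val where
  simplexes := {Z | Z.Nonempty ∧ ∃ X Y, M.toCSC.IsFacet X ∧ Act.toCSC.IsFacet Y ∧
    M.sat X (Act.pre Y) ∧ Z ⊆ chromPair M.color Act.color X Y}
  nonempty_mem _ h := h.1
  finite_mem Z h := by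
    obtain ⟨-, X, Y, hX, hY, -, hsub⟩ := h
    exact (((M.toCSC.finite_mem X hX.1).prod (Act.toCSC.finite_mem Y hY.1)).subset
      (fun p hp => Set.mk_mem_prod hp.1 hp.2.1)).subset hsub
  down_closed Z hZ Y' hsub hne := by
    obtain ⟨-, X, Y, hX, hY, hpre, hZsub⟩ := hZ
    exact ⟨hne, X, Y, hX, hY, hpre, hsub.trans hZsub⟩
  color p := M.color p.1
  chromatic := by
    rintro Z ⟨-, X, Y, hX, hY, -, hsub⟩ p hp q hq hc
    obtain ⟨hp1, hp2, hpc⟩ := hsub hp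
    obtain ⟨hq1, hq2, hqc⟩ := hsub hq
    have h1 : p.1 = q.1 := M.toCSC.chromatic X hX.1 hp1 hq1 hc
    have h2 : p.2 = q.2 := Act.toCSC.chromatic Y hY.1 hp2 hq2 (by rw [← hpc, ← hqc, h1])
    exact Prod.ext h1 h2
  label p := M.label p.1
  label_local := by
    rintro ⟨u, w⟩ hv p hp
    obtain ⟨-, X, Y, hX, hY, -, hsub⟩ := hv
    have hu : u ∈ X := (hsub (Set.mem_singleton _)).1
    exact M.label_local u (M.toCSC.isVertex_of_mem hX.1 hu) p hp

/-- The product update of pure simplicial models is pure: its facets are exactly the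
chromatic products `X × Y` of enabled pairs of facets. -/
lemma SModel.update_pure {n : ℕ} {V W Val : Type} (M : SModel (Fin (n+1)) V Val)
    (Act : SActModel (Fin (n+1)) W Val) (hpM : M.toCSC.Pure n)
    (hpA : Act.toCSC.Pure n) : (M.update Act).toCSC.Pure n := by
  rintro Z ⟨⟨-, X, Y, hX, hY, hpre, hsub⟩, hmax⟩
  have hne : (chromPair M.color Act.color X Y).Nonempty :=
    M.toCSC.chromPair_nonempty Act.toCSC hpA hX hY
  have hmem : chromPair M.color Act.color X Y ∈ (M.update Act).simplexes :=
    ⟨hne, X, Y, hX, hY, hpre, subset_rfl⟩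
  have hZ : Z = chromPair M.color Act.color X Y := hmax _ hmem hsub
  rw [hZ]
  exact M.toCSC.ncard_chromPair Act.toCSC hpM hpA hX hY

/-! ### The input simplicial model and the consensus task -/

/-- The input simplicial model: each agent independently receives an input value in
`Val`. The vertex `(a, x)` means "agent `a` has input `x`", labeled by the corresponding
atomic proposition; simplexes are the partial input assignments, so facets are the total
input assignments. -/
def inputModel (n : ℕ) (Val : Type) : SModel (Fin (n+1)) (Fin (n+1) × Val) Val where
  simplexes := {X | X.Nonempty ∧ Set.InjOn Prod.fst X}
  nonempty_mem _ h := h.1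
  finite_mem X h := Set.Finite.of_finite_image (Set.toFinite _) h.2
  down_closed X hX Y hYX hY := ⟨hY, hX.2.mono hYX⟩
  color := Prod.fst
  chromatic _ h := h.2
  label p := {p}
  label_local := by
    rintro v _ p hp
    rw [Set.mem_singleton_iff] at hp
    rw [hp]

/-- The formula `φ_x`: "at least one agent has input `x`". -/
def someone (n : ℕ) {Val : Type} [Inhabited Val] (x : Val) :
    Form (Fin (n+1)) (Fin (n+1) × Val) :=
  bigOr ((List.finRange (n+1)).map fun a => Form.atom (a, x))

/-- The decision assignment where every agent decides the value `x`. -/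
def allDecide (n : ℕ) {Val : Type} (x : Val) : Set (Fin (n+1) × Val) := {p | p.2 = x}

open Classical in
/-- The binary consensus task, as a simplicial action model: it has exactly two facets,
`X_0 = allDecide false` (every agent decides `0`, with precondition "someone has input
`0`", i.e. true at every input facet except the all-`1` one) and `X_1 = allDecide true`
(symmetrically). -/
noncomputable def consensusTask (n : ℕ) :
    SActModel (Fin (n+1)) (Fin (n+1) × Bool) Bool where
  simplexes := {Z | Z.Nonempty ∧ Set.InjOn Prod.fst Z ∧ ∃ b : Bool, ∀ p ∈ Z, p.2 = b}
  nonempty_mem _ h := h.1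
  finite_mem Z h := Set.Finite.of_finite_image (Set.toFinite _) h.2.1
  down_closed Z hZ Y hYZ hY :=
    ⟨hY, hZ.2.1.mono hYZ, hZ.2.2.imp fun b hb p hp => hb p (hYZ hp)⟩
  color := Prod.fst
  chromatic _ h := h.2.1
  pre Z := if ∃ p ∈ Z, p.2 = true then someone n true else someone n false

/-! ### Auxiliary lemmas for Statement 14 -/

section Aux

variable {n : ℕ}

lemma sat_or' {A V Val : Type} (M : SModel A V Val) (X : Set V)
    (φ ψ : Form A (A × Val)) :
    M.sat X (Form.or φ ψ) ↔ M.sat X φ ∨ M.sat X ψ := by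
  simp only [Form.or, SModel.sat]; tauto

lemma sat_falsum' {A V Val : Type} [Inhabited (A × Val)] (M : SModel A V Val)
    (X : Set V) : ¬ M.sat X Form.falsum := by
  rintro ⟨h1, h2⟩; exact h2 h1

lemma sat_bigOr' {A V Val : Type} [Inhabited (A × Val)] (M : SModel A V Val)
    (X : Set V) (l : List (Form A (A × Val))) :
    M.sat X (bigOr l) ↔ ∃ φ ∈ l, M.sat X φ := by
  induction l with
  | nil => simp [bigOr, sat_falsum']
  | cons a l ih =>
    simp only [bigOr, List.foldr_cons] at *
    rw [sat_or', ih]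
    simp

lemma sat_someone_input {X : Set (Fin (n+1) × Bool)} {b : Bool} :
    (inputModel n Bool).sat X (someone n b) ↔ ∃ a : Fin (n+1), (a, b) ∈ X := by
  rw [someone, sat_bigOr']
  constructor
  · rintro ⟨φ, hφ, hsat⟩
    simp only [List.mem_map, List.mem_finRange] at hφ
    obtain ⟨a, -, rfl⟩ := hφ
    obtain ⟨v, hv, hlab⟩ := hsat
    have : v = (a, b) := by simpa [inputModel, SModel.sat, eq_comm] using hlab
    exact ⟨a, this ▸ hv⟩
  · rintro ⟨a, ha⟩
    exact ⟨Form.atom (a, b), by simp, ⟨(a, b), ha, by simp [inputModel]⟩⟩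

lemma sat_someone_update {Z : Set ((Fin (n+1) × Bool) × (Fin (n+1) × Bool))} {b : Bool} :
    ((inputModel n Bool).update (consensusTask n)).sat Z (someone n b) ↔
      ∃ p ∈ Z, p.1.2 = b := by
  rw [someone, sat_bigOr']
  constructor
  · rintro ⟨φ, hφ, hsat⟩
    simp only [List.mem_map, List.mem_finRange] at hφ
    obtain ⟨a, -, rfl⟩ := hφ
    obtain ⟨v, hv, hlab⟩ := hsat
    have : v.1 = (a, b) := by simpa [SModel.update, inputModel, eq_comm] using hlab
    exact ⟨v, hv, by rw [this]⟩
  · rintro ⟨p, hp, hb⟩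
    exact ⟨Form.atom (p.1.1, b), by simp, ⟨p, hp, by simp [SModel.update, inputModel, ← hb]⟩⟩

/-- The input model is pure. -/
lemma input_pure : (inputModel n Bool).toCSC.Pure n := by
  rintro X ⟨hX, hmax⟩
  have hsurj : Prod.fst '' X = Set.univ := by
    by_contra h
    obtain ⟨a, ha⟩ := (Set.ne_univ_iff_exists_notMem _).mp h
    have hins : insert (a, false) X ∈ (inputModel n Bool).simplexes := by
      refine ⟨(Set.insert_nonempty _ _), ?_⟩
      rintro p (rfl | hp) q (rfl | hq) h
      · rfl
      · exact absurd ⟨q, hq, h.symm⟩ ha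
      · exact absurd ⟨p, hp, h⟩ ha
      · exact hX.2 hp hq h
    have := hmax _ hins (Set.subset_insert _ _)
    exact ha ⟨(a, false), by rw [this]; exact Set.mem_insert _ _, rfl⟩
  have : (Prod.fst '' X).ncard = X.ncard := Set.ncard_image_of_injOn hX.2
  rw [hsurj, Set.ncard_univ] at this
  simpa using this.symm

/-- Facets of the consensus task are exactly the `allDecide` sets. -/
lemma task_facet_iff {Y : Set (Fin (n+1) × Bool)} :
    (consensusTask n).toCSC.IsFacet Y ↔ ∃ b, Y = allDecide n b := by
  have hsimp : ∀ b : Bool, allDecide n b ∈ (consensusTask n).simplexes := by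
    intro b
    refine ⟨⟨(0, b), rfl⟩, ?_, b, fun p hp => hp⟩
    rintro p hp q hq h
    exact Prod.ext h (hp.trans hq.symm)
  constructor
  · rintro ⟨hY, hmax⟩
    obtain ⟨hne, hinj, b, hb⟩ := hY
    refine ⟨b, hmax _ (hsimp b) fun p hp => hb p hp⟩
  · rintro ⟨b, rfl⟩
    refine ⟨hsimp b, ?_⟩
    rintro Y ⟨hne, hinj, b', hb'⟩ hsub
    have hbb : b' = b := by
      have := hb' (0, b) (hsub rfl)
      simpa using this.symm
    apply Set.Subset.antisymm hsub
    intro p hp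
    exact (hb' p hp).trans hbb

/-- The consensus task is pure. -/
lemma task_pure : (consensusTask n).toCSC.Pure n := by
  intro Y hY
  obtain ⟨b, rfl⟩ := task_facet_iff.mp hY
  have hinj : Set.InjOn Prod.fst (allDecide n b) := by
    rintro p hp q hq h
    exact Prod.ext h (hp.trans hq.symm)
  have himg : Prod.fst '' allDecide n b = Set.univ := by
    apply Set.eq_univ_of_forall
    intro a
    exact ⟨(a, b), rfl, rfl⟩
  have := Set.ncard_image_of_injOn hinj
  rw [himg, Set.ncard_univ] at this
  simpa using this.symm

lemma pre_allDecide (b : Bool) : (consensusTask n).pre (allDecide n b) = someone n b := by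
  cases b
  · unfold consensusTask
    dsimp only
    rw [if_neg]
    rintro ⟨p, hp, hpt⟩
    rw [show p.2 = false from hp] at hpt
    exact absurd hpt (by simp)
  · unfold consensusTask
    dsimp only
    rw [if_pos ⟨(0, true), rfl, rfl⟩]

lemma mem_chromPair_allDecide {X : Set (Fin (n+1) × Bool)} {b : Bool}
    {p : (Fin (n+1) × Bool) × (Fin (n+1) × Bool)} :
    p ∈ chromPair (inputModel n Bool).color (consensusTask n).color X (allDecide n b) ↔
      p.1 ∈ X ∧ p.2 = (p.1.1, b) := by
  constructor
  · rintro ⟨h1, h2, h3⟩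
    exact ⟨h1, Prod.ext ((show p.1.1 = p.2.1 from h3)).symm h2⟩
  · rintro ⟨h1, h2⟩
    exact ⟨h1, by rw [h2]; rfl, by rw [h2]; rfl⟩

/-- The key facet characterization (first conjunct of Statement 14). -/
lemma update_facet_iff {Z : Set ((Fin (n+1) × Bool) × (Fin (n+1) × Bool))} :
    ((inputModel n Bool).update (consensusTask n)).toCSC.IsFacet Z ↔
      ∃ (b : Bool) (X : Set (Fin (n+1) × Bool)),
        (inputModel n Bool).toCSC.IsFacet X ∧
        (inputModel n Bool).sat X (someone n b) ∧
        Z = chromPair (inputModel n Bool).color (consensusTask n).color X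
              (allDecide n b) := by
  constructor
  · rintro ⟨⟨hne, X, Y, hX, hY, hpre, hsub⟩, hmax⟩
    obtain ⟨b, rfl⟩ := task_facet_iff.mp hY
    rw [pre_allDecide] at hpre
    refine ⟨b, X, hX, hpre, ?_⟩
    apply hmax
    · exact ⟨(inputModel n Bool).toCSC.chromPair_nonempty (consensusTask n).toCSC
        task_pure hX hY, X, _, hX, hY, by rw [pre_allDecide]; exact hpre, subset_rfl⟩
    · exact hsub
  · rintro ⟨b, X, hX, hsat, rfl⟩
    have hY : (consensusTask n).toCSC.IsFacet (allDecide n b) := task_facet_iff.mpr ⟨b, rfl⟩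
    have hmem : chromPair (inputModel n Bool).color (consensusTask n).color X
        (allDecide n b) ∈ ((inputModel n Bool).update (consensusTask n)).simplexes :=
      ⟨(inputModel n Bool).toCSC.chromPair_nonempty (consensusTask n).toCSC
        task_pure hX hY, X, _, hX, hY, by rw [pre_allDecide]; exact hsat, subset_rfl⟩
    refine ⟨hmem, ?_⟩
    rintro Z' hZ' hsub
    obtain ⟨hne', X', Y', hX', hY', hpre', hsub'⟩ := hZ'
    have hcard : (chromPair (inputModel n Bool).color (consensusTask n).color X
        (allDecide n b)).ncard = n + 1 :=
      (inputModel n Bool).toCSC.ncard_chromPair (consensusTask n).toCSC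
        input_pure task_pure hX hY
    have hcard' : (chromPair (inputModel n Bool).color (consensusTask n).color X'
        Y').ncard = n + 1 :=
      (inputModel n Bool).toCSC.ncard_chromPair (consensusTask n).toCSC
        input_pure task_pure hX' hY'
    have hfin : (chromPair (inputModel n Bool).color (consensusTask n).color X'
        Y').Finite := by
      apply Set.Finite.subset (((inputModel n Bool).toCSC.finite_mem X' hX'.1).prod
        ((consensusTask n).toCSC.finite_mem Y' hY'.1))
      rintro p ⟨h1, h2, -⟩
      exact Set.mk_mem_prod h1 h2
    have heq := Set.eq_of_subset_of_ncard_le (hsub.trans hsub') (by omega) hfin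
    apply Set.Subset.antisymm hsub
    rw [heq]
    exact hsub'

end Aux

/-- In the product update `I[𝒯]` of the binary input model with the
binary consensus task, the underlying complex is the disjoint union of `I_0 × X_0` and
`I_1 × X_1` (the facets are exactly the products of an input facet where some agent has
input `b` with the all-`b` decision facet, and no facet mixes decisions), and at every
facet of `I_b × X_b` it is common knowledge that at least one agent has input `b`. -/
theorem statement14 (n : ℕ) :
    (∀ Z, ((inputModel n Bool).update (consensusTask n)).toCSC.IsFacet Z ↔
      ∃ (b : Bool) (X : Set (Fin (n+1) × Bool)),
        (inputModel n Bool).toCSC.IsFacet X ∧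
        (inputModel n Bool).sat X (someone n b) ∧
        Z = chromPair (inputModel n Bool).color (consensusTask n).color X
              (allDecide n b)) ∧
    (∀ Z, ((inputModel n Bool).update (consensusTask n)).toCSC.IsFacet Z →
      ¬ ((∃ p ∈ Z, p.2.2 = false) ∧ (∃ p ∈ Z, p.2.2 = true))) ∧
    (∀ (b : Bool) Z, ((inputModel n Bool).update (consensusTask n)).toCSC.IsFacet Z →
      (∀ p ∈ Z, p.2.2 = b) →
      ((inputModel n Bool).update (consensusTask n)).CSat Set.univ Z (someone n b)) := by
  refine ⟨fun Z => update_facet_iff, ?_, ?_⟩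
  · rintro Z hZ ⟨⟨p, hp, hpf⟩, ⟨q, hq, hqt⟩⟩
    obtain ⟨b, X, hX, hsat, rfl⟩ := update_facet_iff.mp hZ
    rw [(mem_chromPair_allDecide.mp hp).2] at hpf
    rw [(mem_chromPair_allDecide.mp hq).2] at hqt
    exact absurd ((hpf : b = false).symm.trans (hqt : b = true)) (by simp)
  · intro b Z hZ hall Y hreach
    have key : ((inputModel n Bool).update (consensusTask n)).toCSC.IsFacet Y ∧
        ∀ p ∈ Y, p.2.2 = b := by
      induction hreach with
      | refl => exact ⟨hZ, hall⟩
      | tail h1 h2 ih =>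
        obtain ⟨-, hfY, v, ⟨hvY', hvY⟩, -⟩ := h2
        obtain ⟨b', X', hX', hsat', rfl⟩ := update_facet_iff.mp hfY
        have hb' : b' = b := by
          have h1 := (mem_chromPair_allDecide.mp hvY).2
          have h2 := ih.2 v hvY'
          rw [h1] at h2
          exact h2
        refine ⟨hfY, ?_⟩
        intro p hp
        rw [(mem_chromPair_allDecide.mp hp).2]
        exact hb'
    obtain ⟨hfY, hallY⟩ := key
    obtain ⟨b', X', hX', hsat', rfl⟩ := update_facet_iff.mp hfY
    have hne := ((inputModel n Bool).update (consensusTask n)).nonempty_mem _ hfY.1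
    obtain ⟨p, hp⟩ := hne
    have hb' : b' = b := by
      have h1 := (mem_chromPair_allDecide.mp hp).2
      have h2 := hallY p hp
      rw [h1] at h2
      exact h2
    subst hb'
    obtain ⟨a, ha⟩ := sat_someone_input.mp hsat'
    exact sat_someone_update.mpr ⟨((a, b'), (a, b')), mem_chromPair_allDecide.mpr
      ⟨ha, rfl⟩, rfl⟩
end
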